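/- For the function f(x,u,p,q,r) = (5/3)·r²/q, at every point (x,u,p,q,r) ∈ ℝ⁵ with q ≠ 0 the Cartan invariants satisfy I₄ = 5/(9q) (in particular I₄ ≠ 0), I₅ = 0, I₆ = −10r/(9q²), and I₈ = 0. -/

import Mathlib

noncomputable section

/-- Functions of the five jet variables `(x, u, p, q, r)`. -/
abbrev Jet5 := ℝ → ℝ → ℝ → ℝ → ℝ → ℝ

/-- Partial derivative `F_x`. -/
def pX (F : Jet5) (x u p q r : ℝ) : ℝ := deriv (fun t => F t u p q r) x
/-- Partial derivative `F_u`. -/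
def pU (F : Jet5) (x u p q r : ℝ) : ℝ := deriv (fun t => F x t p q r) u
/-- Partial derivative `F_p`. -/
def pP (F : Jet5) (x u p q r : ℝ) : ℝ := deriv (fun t => F x u t q r) p
/-- Partial derivative `F_q`. -/
def pQ (F : Jet5) (x u p q r : ℝ) : ℝ := deriv (fun t => F x u p t r) q
/-- Partial derivative `F_r`. -/
def pR (F : Jet5) (x u p q r : ℝ) : ℝ := deriv (fun t => F x u p q t) r

/-- Total derivative operator `D̂ₓF = F_x + p F_u + q F_p + r F_q + f F_r`. -/
def Dhat (f F : Jet5) : Jet5 := fun x u p q r =>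
  pX F x u p q r + p * pU F x u p q r + q * pP F x u p q r + r * pQ F x u p q r
    + f x u p q r * pR F x u p q r

/-- Cartan invariant `I₀ = −f_r`. -/
def I0 (f : Jet5) : Jet5 := fun x u p q r => - pR f x u p q r

/-- Cartan invariant `I₁ = (1/4)I₀² − (1/6)D̂ₓI₀`. -/
def I1 (f : Jet5) : Jet5 := fun x u p q r =>
  (1 / 4) * (I0 f x u p q r) ^ 2 - (1 / 6) * Dhat f (I0 f) x u p q r

/-- Cartan invariant `I₂ = −(1/2)D̂ₓI₀ − f_q`. -/
def I2 (f : Jet5) : Jet5 := fun x u p q r =>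
  -(1 / 2) * Dhat f (I0 f) x u p q r - pQ f x u p q r

/-- Cartan invariant `I₃ = −(1/8)(I₀)_r·I₀ + (1/4)(I₁)_r − (1/12)(I₂)_r`. -/
def I3 (f : Jet5) : Jet5 := fun x u p q r =>
  -(1 / 8) * pR (I0 f) x u p q r * I0 f x u p q r
    + (1 / 4) * pR (I1 f) x u p q r - (1 / 12) * pR (I2 f) x u p q r

/-- Cartan invariant `I₄ = −(1/6)(I₀)_r`. -/
def I4 (f : Jet5) : Jet5 := fun x u p q r => -(1 / 6) * pR (I0 f) x u p q r

/-- Cartan invariant on the branch `I₄ ≠ 0`: `I₅ = −(1/2)(I₄)_r/I₄²`. -/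
def I5 (f : Jet5) : Jet5 := fun x u p q r =>
  -(1 / 2) * pR (I4 f) x u p q r / (I4 f x u p q r) ^ 2

/-- Cartan invariant on the branch `I₄ ≠ 0`: `I₆ = −(3/2)I₀·I₄ − (I₂)_r − 6I₃`. -/
def I6 (f : Jet5) : Jet5 := fun x u p q r =>
  -(3 / 2) * I0 f x u p q r * I4 f x u p q r - pR (I2 f) x u p q r - 6 * I3 f x u p q r

/-- Cartan invariant on the branch `I₄ ≠ 0`:
`I₈ = (I₆/I₄²)(D̂ₓI₄ − (I₄)_r f) − (1/I₄)D̂ₓI₆ + (3/4)I₀² − (1/2)I₀I₆/I₄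
      + (3/10)I₂ + (1/3)I₆²/I₄² − (27/10)I₁`. -/
def I8 (f : Jet5) : Jet5 := fun x u p q r =>
  (I6 f x u p q r / (I4 f x u p q r) ^ 2)
      * (Dhat f (I4 f) x u p q r - pR (I4 f) x u p q r * f x u p q r)
    - (1 / I4 f x u p q r) * Dhat f (I6 f) x u p q r
    + (3 / 4) * (I0 f x u p q r) ^ 2
    - (1 / 2) * I0 f x u p q r * I6 f x u p q r / I4 f x u p q r
    + (3 / 10) * I2 f x u p q r
    + (1 / 3) * (I6 f x u p q r) ^ 2 / (I4 f x u p q r) ^ 2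
    - (27 / 10) * I1 f x u p q r

/-!
For `f = c r²/q` every invariant is again a monomial `a rᵏ/qᵐ`, and the partial derivatives and
`D̂ₓ` act on such monomials by explicit rules on `(a, k, m)`. Running through the definitions for
general `c` gives `I₄ = c/(3q)`, `I₅ = 0`, `I₆ = c(1-c) r/q²` and
`I₈ = (3/10)(3c-4)(3c-5) r²/q²`, which vanishes exactly for the two exponents `c = 4/3, 5/3`.
-/

def rqMonomial (a : ℝ) (k m : ℕ) : Jet5 := fun _ _ _ q r => a * r ^ k / q ^ m

section Monomial

variable (a : ℝ) (k m : ℕ)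

theorem pR_rqMonomial : pR (rqMonomial a k m) = rqMonomial (a * k) (k - 1) m := by
  funext x u p q r
  simp only [pR, rqMonomial, deriv_div_const, deriv_const_mul_field, deriv_pow_field]
  ring

-- No `q ≠ 0` is needed: at the pole both sides take the junk value `0` (`deriv_zpow`, `x / 0 = 0`).
theorem pQ_rqMonomial : pQ (rqMonomial a k m) = rqMonomial (-(a * m)) k (m + 1) := by
  funext x u p q r
  have hzpow : (fun t : ℝ => a * r ^ k / t ^ m) = fun t => a * r ^ k * t ^ (-(m : ℤ)) := by
    funext t; rw [zpow_neg, zpow_natCast, div_eq_mul_inv]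
  have hexp : -(m : ℤ) - 1 = -((m + 1 : ℕ) : ℤ) := by push_cast; ring
  simp only [pQ, rqMonomial]
  rw [hzpow, deriv_const_mul_field, deriv_zpow, hexp, zpow_neg, zpow_natCast]
  push_cast
  ring

theorem Dhat_rqMonomial (c : ℝ) :
    Dhat (rqMonomial c 2 1) (rqMonomial a k m)
      = rqMonomial (a * (c * k - m)) (k + 1) (m + 1) := by
  funext x u p q r
  simp only [Dhat, pX, pU, pP, rqMonomial, deriv_const, pQ_rqMonomial, pR_rqMonomial]
  cases k with
  | zero => ring
  | succ j =>
    rcases eq_or_ne q 0 with rfl | hq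
    · simp
    · field_simp
      simp only [Nat.add_sub_cancel]
      ring

end Monomial

section Invariants

variable (c : ℝ)

theorem I0_rqMonomial : I0 (rqMonomial c 2 1) = rqMonomial (-2 * c) 1 1 := by
  funext x u p q r
  simp only [I0, pR_rqMonomial, rqMonomial]
  norm_num
  ring

theorem I1_rqMonomial : I1 (rqMonomial c 2 1) = rqMonomial ((4 * c ^ 2 - c) / 3) 2 2 := by
  funext x u p q r
  simp only [I1, I0_rqMonomial, Dhat_rqMonomial, rqMonomial]
  ring

theorem I2_rqMonomial : I2 (rqMonomial c 2 1) = rqMonomial (c ^ 2) 2 2 := by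
  funext x u p q r
  simp only [I2, I0_rqMonomial, Dhat_rqMonomial, pQ_rqMonomial, rqMonomial]
  push_cast
  ring

theorem I3_rqMonomial : I3 (rqMonomial c 2 1) = rqMonomial (-c / 6) 1 2 := by
  funext x u p q r
  simp only [I3, I0_rqMonomial, I1_rqMonomial, I2_rqMonomial, pR_rqMonomial, rqMonomial]
  push_cast
  ring

theorem I4_rqMonomial : I4 (rqMonomial c 2 1) = rqMonomial (c / 3) 0 1 := by
  funext x u p q r
  simp only [I4, I0_rqMonomial, pR_rqMonomial, rqMonomial]
  push_cast
  ring

theorem I5_rqMonomial : I5 (rqMonomial c 2 1) = 0 := by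
  funext x u p q r
  simp [I5, I4_rqMonomial, pR_rqMonomial, rqMonomial]

theorem I6_rqMonomial : I6 (rqMonomial c 2 1) = rqMonomial (c * (1 - c)) 1 2 := by
  funext x u p q r
  simp only [I6, I0_rqMonomial, I2_rqMonomial, I3_rqMonomial, I4_rqMonomial, pR_rqMonomial,
    rqMonomial]
  push_cast
  ring

theorem I8_rqMonomial (hc : c ≠ 0) :
    I8 (rqMonomial c 2 1) = rqMonomial (3 / 10 * (3 * c - 4) * (3 * c - 5)) 2 2 := by
  funext x u p q r
  simp only [I8, I0_rqMonomial, I1_rqMonomial, I2_rqMonomial, I4_rqMonomial, I6_rqMonomial,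
    Dhat_rqMonomial, pR_rqMonomial, rqMonomial]
  rcases eq_or_ne q 0 with rfl | hq
  · simp
  · field_simp
    push_cast
    ring

end Invariants

theorem stmt_13 (f : Jet5) (hf : f = fun _ _ _ q r => (5 / 3) * r ^ 2 / q) :
    ∀ x u p q r : ℝ, q ≠ 0 →
      I4 f x u p q r = 5 / (9 * q) ∧ I4 f x u p q r ≠ 0 ∧
      I5 f x u p q r = 0 ∧
      I6 f x u p q r = -10 * r / (9 * q ^ 2) ∧
      I8 f x u p q r = 0 := by
  have hmono : f = rqMonomial (5 / 3) 2 1 := by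
    rw [hf]; funext x u p q r; rw [rqMonomial, pow_one]
  intro x u p q r hq
  rw [hmono, I4_rqMonomial, I5_rqMonomial, I6_rqMonomial, I8_rqMonomial _ (by norm_num)]
  simp only [rqMonomial]
  refine ⟨by ring, by simpa using hq, rfl, by ring, by norm_num⟩
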